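/- Let μ be a uniformly locally bounded signed Borel measure on ℝ, E ∈ ℝ, and let (u,v) be a solution of −u'' + uμ = Eu such that u ∈ L²(ℝ), v ∈ L²(ℝ) (i.e. u belongs to W¹₂(ℝ)). Then u(x) → 0 and v(x) → 0 as |x| → ∞. -/

import Mathlib

open MeasureTheory Filter Set Real
open scoped ENNReal

/-- A locally finite signed Borel measure on `ℝ`, represented as a formal
difference `pos - neg` of two nonnegative Borel measures. -/
structure SM where
  pos : Measure ℝ
  neg : Measure ℝ

/-- Local finiteness of both parts (i.e. the signed measure has locally finite
total variation). -/
def SM.LocFin (μ : SM) : Prop :=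
  IsLocallyFiniteMeasure μ.pos ∧ IsLocallyFiniteMeasure μ.neg

/-- The total variation `|a - b|` of the formal difference of two measures,
using the lattice-theoretic subtraction of measures (Jordan decomposition). -/
noncomputable def tvSub (a b : Measure ℝ) : Measure ℝ := (a - b) + (b - a)

/-- The total variation measure `|μ|` of a signed measure. -/
noncomputable def SM.tv (μ : SM) : Measure ℝ := tvSub μ.pos μ.neg

/-- The total variation `|μ₁ - μ₂|` of the difference of two signed measures. -/
noncomputable def tvDiff (μ₁ μ₂ : SM) : Measure ℝ :=
  tvSub (μ₁.pos + μ₂.neg) (μ₂.pos + μ₁.neg)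

/-- `‖ν‖_loc = sup_x ν([x, x+1])`. -/
noncomputable def normLoc (ν : Measure ℝ) : ℝ≥0∞ := ⨆ x : ℝ, ν (Set.Icc x (x + 1))

/-- A measure is uniformly locally bounded if `sup_x ν([x,x+1]) < ∞`. -/
def UnifLocBounded (ν : Measure ℝ) : Prop := normLoc ν < ⊤

/-- `μ` is `p`-periodic: `μ(· + p) = μ`. -/
def SM.IsPeriodic (μ : SM) (p : ℝ) : Prop :=
  Measure.map (fun x => x + p) μ.pos = μ.pos ∧ Measure.map (fun x => x + p) μ.neg = μ.neg

/-- `I_x = [min(x,0), max(x,0)]`. -/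
def Ix (x : ℝ) : Set ℝ := Set.Icc (min x 0) (max x 0)

/-- The integral `∫_A f dμ` of `f` over `A` against the signed measure `μ`. -/
noncomputable def SM.integOn (μ : SM) (f : ℝ → ℝ) (A : Set ℝ) : ℝ :=
  (∫ t in A, f t ∂μ.pos) - (∫ t in A, f t ∂μ.neg)

/-- `∫_0^x f dμ := ∫_{[0,x]} f dμ` for `x ≥ 0` and `:= -∫_{(x,0)} f dμ` for `x < 0`. -/
noncomputable def intRight (μ : SM) (f : ℝ → ℝ) (x : ℝ) : ℝ :=
  if 0 ≤ x then μ.integOn f (Set.Icc 0 x) else - μ.integOn f (Set.Ioo x 0)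

/-- `(u, v)` is a solution of `-u'' + u μ = E u`: `u` is locally absolutely
continuous with `u(x) = u(0) + ∫_0^x v`, and
`v(x) = v(0) + ∫_0^x u dμ - E ∫_0^x u` (`v` is the right limit `u'(·+)`). -/
structure IsSolution (μ : SM) (E : ℝ) (u v : ℝ → ℝ) : Prop where
  locInt : LocallyIntegrable v volume
  u_eq : ∀ x : ℝ, u x = u 0 + ∫ t in (0:ℝ)..x, v t
  v_eq : ∀ x : ℝ, v x = v 0 + intRight μ u x - E * ∫ t in (0:ℝ)..x, u t

/-- The total variation measure `|μ - E λ|`, `λ` Lebesgue measure. -/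
noncomputable def tvWithE (μ : SM) (E : ℝ) : Measure ℝ :=
  tvSub (μ.pos + ENNReal.ofReal (-E) • volume) (μ.neg + ENNReal.ofReal E • volume)

/-- Membership in the Sobolev space `W¹₂(ℝ)` (continuous representative `u`
with derivative `d`): `u, d ∈ L²` and `u(x) = u(0) + ∫_0^x d`. -/
def IsW12 (u d : ℝ → ℝ) : Prop :=
  MemLp u 2 volume ∧ MemLp d 2 volume ∧ ∀ x : ℝ, u x = u 0 + ∫ t in (0:ℝ)..x, d t

/-- Addition of signed measures. -/
noncomputable def SM.add (a b : SM) : SM := ⟨a.pos + b.pos, a.neg + b.neg⟩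

/-- The translate `T_x μ = μ(· - x)`. -/
noncomputable def SM.translate (μ : SM) (x : ℝ) : SM :=
  ⟨Measure.map (fun y => y + x) μ.pos, Measure.map (fun y => y + x) μ.neg⟩

/-- The scaled measure `μ ∘ β`, `(μ ∘ β)(A) = μ(β A)`. -/
noncomputable def SM.scale (μ : SM) (β : ℝ) : SM :=
  ⟨Measure.map (fun y => y / β) μ.pos, Measure.map (fun y => y / β) μ.neg⟩

/-- `μ` is a Gordon measure. -/
def IsGordon (μ : SM) : Prop :=
  μ.LocFin ∧ UnifLocBounded μ.tv ∧
  ∃ (μs : ℕ → SM) (p : ℕ → ℝ),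
    (∀ m, 0 < p m) ∧ (∀ m, (μs m).LocFin) ∧ (∀ m, (μs m).IsPeriodic (p m)) ∧
    (∀ m, UnifLocBounded (μs m).tv) ∧
    (∃ M : ℝ≥0∞, M < ⊤ ∧ ∀ m, normLoc (μs m).tv ≤ M) ∧
    Filter.Tendsto p Filter.atTop Filter.atTop ∧
    ∀ C : ℝ, Filter.Tendsto
      (fun m => Real.exp (C * p m) * ((tvDiff μ (μs m)) (Set.Icc (-(p m)) (2 * p m))).toReal)
      Filter.atTop (nhds 0)

/-! A function `w ∈ L²(ℝ)` whose oscillation on `[a, a + 1]` becomes small as `|a| → ∞` tends to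
zero: `∫_a^{a+1} w²` tends to zero, so `w` is small somewhere on each such interval. For `u` the
oscillation on `[a, a + 1]` is at most `∫_a^{a+1} |v| ≤ (∫_a^{a+1} v²)^{1/2}`. Once `u → 0`, the
equation gives `|v x - v a| ≤ sup_{[a, a+1]} |u| · (‖μ‖_loc + |E|)` there, so `v → 0` as well. -/

open scoped Topology Pointwise

theorem eventually_cocompact_forall_mem_Icc {P : ℝ → Prop} (h : ∀ᶠ t in cocompact ℝ, P t) :
    ∀ᶠ a in cocompact ℝ, ∀ t ∈ Icc a (a + 1), P t := by
  obtain ⟨K, hK, hKP⟩ := mem_cocompact.1 h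
  refine mem_cocompact.2 ⟨K + Icc (-1) 0, hK.add isCompact_Icc, fun a ha t ht => hKP fun htK => ?_⟩
  exact ha ⟨t, htK, a - t, ⟨by linarith [ht.2], by linarith [ht.1]⟩, by ring⟩

theorem tendsto_setIntegral_Icc_cocompact {g : ℝ → ℝ} (hg : Integrable g) :
    Tendsto (fun a => ∫ t in Icc a (a + 1), g t) (cocompact ℝ) (𝓝 0) := by
  have : (cocompact ℝ).IsCountablyGenerated := by
    rw [cocompact_eq_atBot_atTop]; infer_instance
  simp_rw [← integral_indicator measurableSet_Icc]
  rw [← integral_zero ℝ ℝ]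
  refine tendsto_integral_filter_of_dominated_convergence (fun t => ‖g t‖)
    (Eventually.of_forall fun a => hg.aestronglyMeasurable.indicator measurableSet_Icc)
    (Eventually.of_forall fun a => Eventually.of_forall fun t => norm_indicator_le_norm_self _ _)
    hg.norm (Eventually.of_forall fun t => tendsto_const_nhds.congr' ?_)
  filter_upwards [(isCompact_Icc (a := t - 1) (b := t)).compl_mem_cocompact] with a ha
  refine (indicator_of_notMem (fun ht => ha ⟨?_, ht.1⟩) _).symm
  linarith [ht.2]

theorem tendsto_zero_cocompact_of_integrable_sq {w : ℝ → ℝ} (hw : Integrable (fun t => w t ^ 2))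
    (hosc : ∀ ε > 0, ∀ᶠ a in cocompact ℝ, ∀ x ∈ Icc a (a + 1), |w x - w a| ≤ ε) :
    Tendsto w (cocompact ℝ) (𝓝 0) := by
  refine NormedAddGroup.tendsto_nhds_zero.2 fun ε hε => ?_
  have hε2 : 0 < ε / 2 := half_pos hε
  filter_upwards [(tendsto_setIntegral_Icc_cocompact hw).eventually (gt_mem_nhds (pow_pos hε2 2)),
    hosc _ hε2] with a hsmall hosc_a
  obtain ⟨y, hy, hwy⟩ :=
    exists_le_setAverage (s := Icc a (a + 1)) (by simp) (by simp) hw.integrableOn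
  rw [setAverage_eq, measureReal_def, Real.volume_Icc, add_sub_cancel_left, ENNReal.ofReal_one,
    ENNReal.toReal_one, inv_one, one_smul] at hwy
  have hy_small : |w y| < ε / 2 := abs_lt_of_sq_lt_sq (hwy.trans_lt hsmall) hε2.le
  have := abs_sub_abs_le_abs_sub (w a) (w y)
  rw [abs_sub_comm] at this
  rw [Real.norm_eq_abs]
  linarith [hosc_a y hy]

theorem integral_abs_le_sqrt_mul_sqrt {α : Type*} [MeasurableSpace α] {μ : Measure α}
    [IsFiniteMeasure μ] {f : α → ℝ} (hf : MemLp f 2 μ) :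
    ∫ x, |f x| ∂μ ≤ √(μ.real univ) * √(∫ x, f x ^ 2 ∂μ) := by
  have h := integral_mul_le_Lp_mul_Lq_of_nonneg Real.HolderConjugate.two_two
    (Eventually.of_forall fun x => abs_nonneg (f x)) (Eventually.of_forall fun _ => zero_le_one)
    (by rw [ENNReal.ofReal_ofNat]; exact hf.abs)
    (by rw [ENNReal.ofReal_ofNat]; exact memLp_const (1 : ℝ))
  simp only [mul_one, integral_const, smul_eq_mul, Real.rpow_two, sq_abs, one_pow,
    ← Real.sqrt_eq_rpow] at h
  rwa [mul_comm] at h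

theorem tendsto_setIntegral_Icc_abs_cocompact {f : ℝ → ℝ} (hf : MemLp f 2 volume) :
    Tendsto (fun a => ∫ t in Icc a (a + 1), |f t|) (cocompact ℝ) (𝓝 0) := by
  have hsqrt := (tendsto_setIntegral_Icc_cocompact hf.integrable_sq).sqrt
  rw [Real.sqrt_zero] at hsqrt
  refine squeeze_zero (fun a => setIntegral_nonneg measurableSet_Icc fun t _ => abs_nonneg _)
    (fun a => ?_) hsqrt
  have := integral_abs_le_sqrt_mul_sqrt (μ := volume.restrict (Icc a (a + 1))) (hf.restrict _)
  simpa using this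

namespace MeasureTheory.Measure

variable {α : Type*} [MeasurableSpace α]

theorem add_sub_eq_add_sub (a b : Measure α) [IsFiniteMeasure a] [IsFiniteMeasure b] :
    a + (b - a) = b + (a - b) := by
  -- both sides equal `a|s + b|sᶜ` for a Hahn set `s` of `a - b`
  obtain ⟨s, hs, hba, hab⟩ := hahn_decomposition a b
  have hba : b.restrict s ≤ a.restrict s := le_iff.2 fun t ht => by
    rw [restrict_apply ht, restrict_apply ht]
    exact hba _ (ht.inter hs) inter_subset_right
  have hab : a.restrict sᶜ ≤ b.restrict sᶜ := le_iff.2 fun t ht => by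
    rw [restrict_apply ht, restrict_apply ht]
    exact hab _ (ht.inter hs.compl) inter_subset_right
  have hsub (c d : Measure α) :
      c - d = (c.restrict s - d.restrict s) + (c.restrict sᶜ - d.restrict sᶜ) := by
    rw [← restrict_sub_eq_restrict_sub_restrict hs,
      ← restrict_sub_eq_restrict_sub_restrict hs.compl, restrict_add_restrict_compl hs]
  rw [hsub b a, hsub a b, sub_eq_zero_of_le hba, sub_eq_zero_of_le hab, zero_add, add_zero]
  calc a + (b.restrict sᶜ - a.restrict sᶜ)
      = a.restrict s + (a.restrict sᶜ + (b.restrict sᶜ - a.restrict sᶜ)) := by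
        rw [← add_assoc, restrict_add_restrict_compl hs]
    _ = b.restrict sᶜ + (b.restrict s + (a.restrict s - b.restrict s)) := by
        rw [add_comm (a.restrict sᶜ), sub_add_cancel_of_le hab, add_comm (b.restrict s),
          sub_add_cancel_of_le hba, add_comm]
    _ = b + (a.restrict s - b.restrict s) := by
        rw [← add_assoc, add_comm (b.restrict sᶜ), restrict_add_restrict_compl hs]

end MeasureTheory.Measure

theorem abs_integral_sub_integral_le {α : Type*} [MeasurableSpace α] {a b : Measure α}
    [IsFiniteMeasure a] [IsFiniteMeasure b] {f : α → ℝ} {M : ℝ}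
    (hfa : Integrable f a) (hfb : Integrable f b)
    (hMa : ∀ᵐ t ∂a, |f t| ≤ M) (hMb : ∀ᵐ t ∂b, |f t| ≤ M) :
    |∫ t, f t ∂a - ∫ t, f t ∂b| ≤ M * ((a - b + (b - a)) univ).toReal := by
  have hJordan : ∫ t, f t ∂a - ∫ t, f t ∂b = ∫ t, f t ∂(a - b) - ∫ t, f t ∂(b - a) := by
    have := congrArg (fun m => ∫ t, f t ∂m) (Measure.add_sub_eq_add_sub a b)
    rw [integral_add_measure hfa (hfb.mono_measure Measure.sub_le),
      integral_add_measure hfb (hfa.mono_measure Measure.sub_le)] at this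
    linarith
  have hab : ‖∫ t, f t ∂(a - b)‖ ≤ M * (a - b).real univ :=
    norm_integral_le_of_norm_le_const (ae_mono Measure.sub_le hMa)
  have hba : ‖∫ t, f t ∂(b - a)‖ ≤ M * (b - a).real univ :=
    norm_integral_le_of_norm_le_const (ae_mono Measure.sub_le hMb)
  rw [hJordan, Measure.add_apply, ENNReal.toReal_add (measure_ne_top _ _) (measure_ne_top _ _)]
  simp only [measureReal_def, Real.norm_eq_abs] at hab hba
  linarith [abs_sub (∫ t, f t ∂(a - b)) (∫ t, f t ∂(b - a))]

theorem SM.abs_integOn_le {μ : SM} (hloc : μ.LocFin) {f : ℝ → ℝ} (hf : Continuous f)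
    {s : Set ℝ} (hs : MeasurableSet s) (hsb : Bornology.IsBounded s) {M : ℝ}
    (hM : ∀ t ∈ s, |f t| ≤ M) :
    |μ.integOn f s| ≤ M * (μ.tv s).toReal := by
  obtain ⟨_, _⟩ := hloc
  have : IsFiniteMeasure (μ.pos.restrict s) := isFiniteMeasure_restrict.2 hsb.measure_lt_top.ne
  have : IsFiniteMeasure (μ.neg.restrict s) := isFiniteMeasure_restrict.2 hsb.measure_lt_top.ne
  have hint (m : Measure ℝ) [IsLocallyFiniteMeasure m] : IntegrableOn f s m :=
    (hf.locallyIntegrable.integrableOn_isCompact hsb.isCompact_closure).mono_set subset_closure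
  have hMs (m : Measure ℝ) : ∀ᵐ t ∂(m.restrict s), |f t| ≤ M := (ae_restrict_mem hs).mono hM
  have h := abs_integral_sub_integral_le (hint μ.pos) (hint μ.neg) (hMs _) (hMs _)
  rwa [← Measure.restrict_sub_eq_restrict_sub_restrict hs,
    ← Measure.restrict_sub_eq_restrict_sub_restrict hs, ← Measure.restrict_add,
    Measure.restrict_apply_univ] at h

noncomputable def measurePrimitive (m : Measure ℝ) (f : ℝ → ℝ) (x : ℝ) : ℝ :=
  if 0 ≤ x then ∫ t in Icc 0 x, f t ∂m else -∫ t in Ioo x 0, f t ∂m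

theorem intRight_eq_measurePrimitive_sub (μ : SM) (f : ℝ → ℝ) (x : ℝ) :
    intRight μ f x = measurePrimitive μ.pos f x - measurePrimitive μ.neg f x := by
  unfold intRight SM.integOn measurePrimitive
  split_ifs <;> ring

theorem measurePrimitive_sub (m : Measure ℝ) [IsLocallyFiniteMeasure m] {f : ℝ → ℝ}
    (hf : Continuous f) {x y : ℝ} (hxy : x ≤ y) :
    measurePrimitive m f y - measurePrimitive m f x = ∫ t in Ioc x y, f t ∂m := by
  have hint {s : Set ℝ} (hsb : Bornology.IsBounded s) : IntegrableOn f s m :=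
    (hf.locallyIntegrable.integrableOn_isCompact hsb.isCompact_closure).mono_set subset_closure
  unfold measurePrimitive
  rcases lt_or_ge x 0 with hx | hx
  · rcases lt_or_ge y 0 with hy | hy
    · rw [if_neg hy.not_ge, if_neg hx.not_ge, ← Ioc_union_Ioo_eq_Ioo hxy hy,
        setIntegral_union (disjoint_left.2 fun t h₁ h₂ => h₁.2.not_gt h₂.1) measurableSet_Ioo
          (hint (Metric.isBounded_Ioc _ _)) (hint (Metric.isBounded_Ioo _ _))]
      ring
    · rw [if_pos hy, if_neg hx.not_ge, ← Ioo_union_Icc_eq_Ioc hx hy,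
        setIntegral_union (disjoint_left.2 fun t h₁ h₂ => h₁.2.not_ge h₂.1) measurableSet_Icc
          (hint (Metric.isBounded_Ioo _ _)) (hint (Metric.isBounded_Icc _ _))]
      ring
  · rw [if_pos (hx.trans hxy), if_pos hx, ← Icc_union_Ioc_eq_Icc hx hxy,
      setIntegral_union (disjoint_left.2 fun t h₁ h₂ => h₁.2.not_gt h₂.1) measurableSet_Ioc
        (hint (Metric.isBounded_Icc _ _)) (hint (Metric.isBounded_Ioc _ _))]
    ring

theorem intRight_sub_intRight {μ : SM} (hloc : μ.LocFin) {f : ℝ → ℝ} (hf : Continuous f)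
    {x y : ℝ} (hxy : x ≤ y) :
    intRight μ f y - intRight μ f x = μ.integOn f (Ioc x y) := by
  obtain ⟨_, _⟩ := hloc
  rw [intRight_eq_measurePrimitive_sub, intRight_eq_measurePrimitive_sub, SM.integOn,
    ← measurePrimitive_sub μ.pos hf hxy, ← measurePrimitive_sub μ.neg hf hxy]
  ring

namespace IsSolution

variable {μ : SM} {E : ℝ} {u v : ℝ → ℝ}

theorem intervalIntegrable_v (hs : IsSolution μ E u v) (x y : ℝ) :
    IntervalIntegrable v volume x y :=
  (hs.locInt.integrableOn_isCompact isCompact_uIcc).intervalIntegrable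

theorem sub_u (hs : IsSolution μ E u v) (x y : ℝ) : u y - u x = ∫ t in x..y, v t := by
  rw [hs.u_eq y, hs.u_eq x, ← intervalIntegral.integral_interval_sub_left
    (hs.intervalIntegrable_v 0 y) (hs.intervalIntegrable_v 0 x)]
  ring

theorem continuous_u (hs : IsSolution μ E u v) : Continuous u := by
  rw [funext hs.u_eq]
  exact continuous_const.add (intervalIntegral.continuous_primitive hs.intervalIntegrable_v 0)

theorem sub_v (hs : IsSolution μ E u v) (hloc : μ.LocFin) {x y : ℝ} (hxy : x ≤ y) :
    v y - v x = μ.integOn u (Ioc x y) - E * ∫ t in x..y, u t := by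
  have hu := hs.continuous_u
  rw [hs.v_eq y, hs.v_eq x, ← intRight_sub_intRight hloc hu hxy,
    ← intervalIntegral.integral_interval_sub_left (hu.intervalIntegrable 0 y)
      (hu.intervalIntegrable 0 x)]
  ring

theorem abs_sub_u_le (hs : IsSolution μ E u v) {a x : ℝ} (hx : x ∈ Icc a (a + 1)) :
    |u x - u a| ≤ ∫ t in Icc a (a + 1), |v t| := by
  rw [hs.sub_u, intervalIntegral.integral_of_le hx.1]
  calc |∫ t in Ioc a x, v t| ≤ ∫ t in Ioc a x, |v t| := abs_integral_le_integral_abs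
    _ ≤ ∫ t in Icc a (a + 1), |v t| :=
      setIntegral_mono_set (hs.locInt.integrableOn_isCompact isCompact_Icc).abs
        (Eventually.of_forall fun t => abs_nonneg _)
        (Ioc_subset_Icc_self.trans (Icc_subset_Icc_right hx.2)).eventuallyLE

theorem abs_sub_v_le (hs : IsSolution μ E u v) (hloc : μ.LocFin) (hub : UnifLocBounded μ.tv)
    {a x δ : ℝ} (hx : x ∈ Icc a (a + 1)) (hδ : ∀ t ∈ Icc a (a + 1), |u t| ≤ δ) :
    |v x - v a| ≤ δ * ((normLoc μ.tv).toReal + |E|) := by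
  have hsub : Ioc a x ⊆ Icc a (a + 1) := Ioc_subset_Icc_self.trans (Icc_subset_Icc_right hx.2)
  have hδ0 : 0 ≤ δ := (abs_nonneg _).trans (hδ a (left_mem_Icc.2 (by linarith)))
  have hμ : |μ.integOn u (Ioc a x)| ≤ δ * (normLoc μ.tv).toReal := by
    refine (μ.abs_integOn_le hloc hs.continuous_u measurableSet_Ioc (Metric.isBounded_Ioc _ _)
      fun t ht => hδ t (hsub ht)).trans (mul_le_mul_of_nonneg_left ?_ hδ0)
    exact ENNReal.toReal_mono hub.ne
      ((measure_mono hsub).trans (le_iSup (fun z => μ.tv (Icc z (z + 1))) a))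
  have hE : |∫ t in a..x, u t| ≤ δ := by
    have := intervalIntegral.norm_integral_le_of_norm_le_const (a := a) (b := x) (f := u)
      fun t ht => hδ t (hsub (uIoc_of_le hx.1 ▸ ht))
    rw [Real.norm_eq_abs, abs_of_nonneg (sub_nonneg.2 hx.1)] at this
    nlinarith [hx.2]
  rw [hs.sub_v hloc hx.1]
  calc |μ.integOn u (Ioc a x) - E * ∫ t in a..x, u t|
      ≤ |μ.integOn u (Ioc a x)| + |E| * |∫ t in a..x, u t| := by
        rw [← abs_mul]; exact abs_sub _ _
    _ ≤ δ * ((normLoc μ.tv).toReal + |E|) := by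
        nlinarith [mul_le_mul_of_nonneg_left hE (abs_nonneg E)]

end IsSolution

/-- If `μ` is a uniformly locally bounded signed Borel measure
and `(u,v)` is a solution of `-u'' + uμ = Eu` with `u, v ∈ L²(ℝ)`, then
`u(x) → 0` and `v(x) → 0` as `|x| → ∞`. -/
theorem solution_tendsto_zero (μ : SM) (hloc : μ.LocFin)
    (hub : UnifLocBounded μ.tv) (E : ℝ) (u v : ℝ → ℝ)
    (hs : IsSolution μ E u v)
    (hu : MemLp u 2 volume) (hv : MemLp v 2 volume) :
    Tendsto u (Filter.cocompact ℝ) (nhds 0) ∧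
      Tendsto v (Filter.cocompact ℝ) (nhds 0) := by
  have hu0 : Tendsto u (cocompact ℝ) (𝓝 0) := by
    refine tendsto_zero_cocompact_of_integrable_sq hu.integrable_sq fun ε hε => ?_
    filter_upwards [(tendsto_setIntegral_Icc_abs_cocompact hv).eventually (ge_mem_nhds hε)]
      with a ha x hx
    exact (hs.abs_sub_u_le hx).trans ha
  refine ⟨hu0, tendsto_zero_cocompact_of_integrable_sq hv.integrable_sq fun ε hε => ?_⟩
  set C := (normLoc μ.tv).toReal + |E|
  have hC : 0 < C + 1 := by positivity
  filter_upwards [eventually_cocompact_forall_mem_Icc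
    (NormedAddGroup.tendsto_nhds_zero.1 hu0 _ (div_pos hε hC))] with a ha x hx
  calc |v x - v a| ≤ ε / (C + 1) * C := hs.abs_sub_v_le hloc hub hx fun t ht => (ha t ht).le
    _ ≤ ε := by
      rw [div_mul_eq_mul_div, div_le_iff₀ hC]
      nlinarith
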